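/- Let n ≥ 5, x = (1,2) ∈ S_n, and for j ∈ {3,...,n} let Z_j = {τ ∈ (S_n)_π : τ(1) = j and τ(j) = 1} for a set of primes π containing 2. Then the sets Z_j are pairwise disjoint, consist of π-elements not commuting with x, each has cardinality |(S_{n-2})_π|, and consequently |(S_n)_π| ≥ n·|(S_{n-2})_π|. -/

import Mathlib

/-!
Left multiplication by the transposition `(a j)` maps the `π`-elements `τ` with `τ a = j`,
`τ j = a` bijectively onto the `π`-elements fixing `a` and `j`: in `τ = (a j) * ρ` the two factors
are disjoint, so `orderOf τ = lcm 2 (orderOf ρ)`, and `2 ∈ π`. Conjugation by `(j b)` then carries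
the fixer of `{a, j}` to the fixer of `{a, b}`. Since `τ a` determines `j`, these sets are disjoint
for distinct `j`; for `j = a` the set contains the fixer of `{a, b}`, so summing over all `n`
values of `j` gives the bound.
-/

def IsPiElement {G : Type*} [Monoid G] (π : Set ℕ) (g : G) : Prop :=
  ∀ q : ℕ, q.Prime → q ∣ orderOf g → q ∈ π

theorem MulEquiv.isPiElement_apply_iff {G H : Type*} [Monoid G] [Monoid H] {π : Set ℕ}
    (e : G ≃* H) (g : G) : IsPiElement π (e g) ↔ IsPiElement π g := by
  unfold IsPiElement
  rw [e.orderOf_eq]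

namespace Equiv.Perm

variable {α : Type*} {π : Set ℕ}

theorem Disjoint.isPiElement_mul_iff {σ τ : Perm α} (h : σ.Disjoint τ) :
    IsPiElement π (σ * τ) ↔ IsPiElement π σ ∧ IsPiElement π τ := by
  unfold IsPiElement
  rw [h.orderOf]
  exact ⟨fun H => ⟨fun q hq hd => H q hq (hd.trans (Nat.dvd_lcm_left _ _)),
      fun q hq hd => H q hq (hd.trans (Nat.dvd_lcm_right _ _))⟩,
    fun ⟨Hσ, Hτ⟩ q hq hd => (hq.dvd_lcm.mp hd).elim (Hσ q hq) (Hτ q hq)⟩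

theorem card_piElements_fixing_conj (c : Perm α) (x y : α) :
    Nat.card {ρ : Perm α | IsPiElement π ρ ∧ ρ x = x ∧ ρ y = y} =
      Nat.card {σ : Perm α | IsPiElement π σ ∧ σ (c x) = c x ∧ σ (c y) = c y} :=
  Nat.card_congr <| (MulAut.conj c).toEquiv.subtypeEquiv fun ρ =>
    and_congr ((MulAut.conj c).isPiElement_apply_iff ρ).symm (by simp)

theorem sum_card_piElements_swapping_le [Fintype α] (a : α) :
    ∑ j, Nat.card {τ : Perm α | IsPiElement π τ ∧ τ a = j ∧ τ j = a} ≤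
      Nat.card {τ : Perm α | IsPiElement π τ} := by
  rw [← Nat.card_sigma]
  refine Nat.card_le_card_of_injective (fun τ => ⟨τ.2.1, τ.2.2.1⟩) ?_
  rintro ⟨j, τ, _, hj, _⟩ ⟨j', τ', _, hj', _⟩ h
  obtain rfl : τ = τ' := congrArg Subtype.val h
  obtain rfl : j = j' := hj.symm.trans hj'
  rfl

variable [DecidableEq α]

theorem isPiElement_swap (h2π : 2 ∈ π) {a b : α} (hab : a ≠ b) : IsPiElement π (swap a b) := by
  intro q hq hdvd
  rw [orderOf_eq_prime (swap_mul_self a b ▸ pow_two (swap a b)) (swap_eq_one_iff.not.mpr hab),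
    Nat.prime_dvd_prime_iff_eq hq Nat.prime_two] at hdvd
  exact hdvd ▸ h2π

theorem disjoint_swap_of_apply_eq {a b : α} {ρ : Perm α} (ha : ρ a = a) (hb : ρ b = b) :
    (swap a b).Disjoint ρ := by
  intro x
  rcases eq_or_ne x a with rfl | hxa
  · exact Or.inr ha
  rcases eq_or_ne x b with rfl | hxb
  · exact Or.inr hb
  exact Or.inl (swap_apply_of_ne_of_ne hxa hxb)

theorem isPiElement_swap_mul_iff (h2π : 2 ∈ π) {a b : α} {ρ : Perm α} (ha : ρ a = a)
    (hb : ρ b = b) : IsPiElement π (swap a b * ρ) ↔ IsPiElement π ρ := by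
  rcases eq_or_ne a b with rfl | hab
  · rw [swap_self, ← one_def, one_mul]
  · rw [(disjoint_swap_of_apply_eq ha hb).isPiElement_mul_iff,
      and_iff_right (isPiElement_swap h2π hab)]

theorem not_commute_swap_of_apply_eq {τ : Perm α} {a b j : α} (hab : a ≠ b) (hτ : τ a = j)
    (hja : j ≠ a) (hjb : j ≠ b) : ¬Commute τ (swap a b) := by
  intro h
  have hτb : τ b = τ a := by
    simpa [hτ, swap_apply_of_ne_of_ne hja hjb] using congrArg (· a) h.eq
  exact hab (τ.injective hτb).symm

theorem card_piElements_swapping_eq (h2π : 2 ∈ π) (a j : α) :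
    Nat.card {τ : Perm α | IsPiElement π τ ∧ τ a = j ∧ τ j = a} =
      Nat.card {ρ : Perm α | IsPiElement π ρ ∧ ρ a = a ∧ ρ j = j} := by
  refine Nat.card_congr <| (Equiv.mulLeft (swap a j)).subtypeEquiv fun τ => ?_
  have hfix_a : (swap a j * τ) a = a ↔ τ a = j := by
    rw [mul_apply, swap_apply_eq_iff, swap_apply_left]
  have hfix_j : (swap a j * τ) j = j ↔ τ j = a := by
    rw [mul_apply, swap_apply_eq_iff, swap_apply_right]
  simp only [Set.mem_ofPred_eq, coe_mulLeft, hfix_a, hfix_j]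
  refine and_congr_left fun ⟨ha, hj⟩ => ?_
  rw [← isPiElement_swap_mul_iff h2π (hfix_a.2 ha) (hfix_j.2 hj), swap_mul_self_mul]

theorem card_piElements_swapping_eq_card_fixing (h2π : 2 ∈ π) {a b j : α} (hab : a ≠ b)
    (hja : j ≠ a) :
    Nat.card {τ : Perm α | IsPiElement π τ ∧ τ a = j ∧ τ j = a} =
      Nat.card {σ : Perm α | IsPiElement π σ ∧ σ a = a ∧ σ b = b} := by
  rw [card_piElements_swapping_eq h2π, card_piElements_fixing_conj (swap j b),
    swap_apply_of_ne_of_ne hja.symm hab, swap_apply_left]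

theorem card_piElements_fixing_le_card_swapping [Finite α] (h2π : 2 ∈ π) {a b : α}
    (hab : a ≠ b) (j : α) :
    Nat.card {σ : Perm α | IsPiElement π σ ∧ σ a = a ∧ σ b = b} ≤
      Nat.card {τ : Perm α | IsPiElement π τ ∧ τ a = j ∧ τ j = a} := by
  rcases eq_or_ne j a with rfl | hja
  · exact Nat.card_mono (Set.toFinite _) fun σ ⟨hσ, hj, _⟩ => ⟨hσ, hj, hj⟩
  · exact (card_piElements_swapping_eq_card_fixing h2π hab hja).ge

theorem card_mul_card_piElements_fixing_le [Fintype α] (h2π : 2 ∈ π) {a b : α} (hab : a ≠ b) :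
    Fintype.card α * Nat.card {σ : Perm α | IsPiElement π σ ∧ σ a = a ∧ σ b = b} ≤
      Nat.card {τ : Perm α | IsPiElement π τ} :=
  calc _ = ∑ _j : α, Nat.card {σ : Perm α | IsPiElement π σ ∧ σ a = a ∧ σ b = b} := by
        rw [Finset.sum_const, Finset.card_univ, smul_eq_mul]
    _ ≤ ∑ j, Nat.card {τ : Perm α | IsPiElement π τ ∧ τ a = j ∧ τ j = a} :=
        Finset.sum_le_sum fun j _ => card_piElements_fixing_le_card_swapping h2π hab j
    _ ≤ _ := sum_card_piElements_swapping_le a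

end Equiv.Perm

theorem swap_noncommuting_pi_sets_general {n : ℕ} [NeZero n] (hn : 5 ≤ n)
    (π : Set ℕ) (h2π : 2 ∈ π) :
    (∀ i j : Fin n, i ≠ j →
      {τ : Equiv.Perm (Fin n) | (∀ q : ℕ, q.Prime → q ∣ orderOf τ → q ∈ π) ∧
          τ 0 = i ∧ τ i = 0} ∩
        {τ : Equiv.Perm (Fin n) | (∀ q : ℕ, q.Prime → q ∣ orderOf τ → q ∈ π) ∧
          τ 0 = j ∧ τ j = 0} = ∅) ∧
    (∀ j : Fin n, j ≠ 0 → j ≠ 1 →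
      ∀ τ ∈ {τ : Equiv.Perm (Fin n) | (∀ q : ℕ, q.Prime → q ∣ orderOf τ → q ∈ π) ∧
          τ 0 = j ∧ τ j = 0},
        (∀ q : ℕ, q.Prime → q ∣ orderOf τ → q ∈ π) ∧
          ¬ Commute τ (Equiv.swap (0 : Fin n) 1)) ∧
    (∀ j : Fin n, j ≠ 0 → j ≠ 1 →
      Nat.card {τ : Equiv.Perm (Fin n) | (∀ q : ℕ, q.Prime → q ∣ orderOf τ → q ∈ π) ∧
          τ 0 = j ∧ τ j = 0}
        = Nat.card {σ : Equiv.Perm (Fin n) |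
            (∀ q : ℕ, q.Prime → q ∣ orderOf σ → q ∈ π) ∧ σ 0 = 0 ∧ σ 1 = 1}) ∧
    n * Nat.card {σ : Equiv.Perm (Fin n) |
        (∀ q : ℕ, q.Prime → q ∣ orderOf σ → q ∈ π) ∧ σ 0 = 0 ∧ σ 1 = 1}
      ≤ Nat.card {τ : Equiv.Perm (Fin n) | ∀ q : ℕ, q.Prime → q ∣ orderOf τ → q ∈ π} := by
  have h01 : (0 : Fin n) ≠ 1 := by
    rw [Ne, Fin.ext_iff, Fin.val_zero, Fin.val_one', Nat.mod_eq_of_lt (by omega)]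
    exact zero_ne_one
  refine ⟨fun i j hij => ?_, ?_, fun j hj0 _ => ?_, ?_⟩
  · exact Set.eq_empty_of_forall_notMem fun τ ⟨⟨_, hi, _⟩, _, hj, _⟩ => hij (hi.symm.trans hj)
  · rintro j hj0 hj1 τ ⟨hτ, hτ0, -⟩
    exact ⟨hτ, Equiv.Perm.not_commute_swap_of_apply_eq h01 hτ0 hj0 hj1⟩
  · exact Equiv.Perm.card_piElements_swapping_eq_card_fixing h2π h01 hj0
  · have h := Equiv.Perm.card_mul_card_piElements_fixing_le (π := π) h2π h01
    rwa [Fintype.card_fin] at h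

/-- Let `n ≥ 5`, `x = (1,2) ∈ S_n` and, for `j ∉ {1,2}`, let
`Z_j = {τ ∈ (S_n)_π : τ(1) = j, τ(j) = 1}`, where `π` is a set of primes
containing `2`. Then the `Z_j` are pairwise disjoint, consist of `π`-elements
not commuting with `x`, each has cardinality `|(S_{n-2})_π|` (identifying
`S_{n-2}` with the permutations fixing `1` and `2`), and consequently
`|(S_n)_π| ≥ n · |(S_{n-2})_π|`. -/
theorem swap_noncommuting_pi_sets {n : ℕ} [NeZero n] (hn : 5 ≤ n)
    (π : Set ℕ) (hπ : ∀ q ∈ π, Nat.Prime q) (h2π : 2 ∈ π) :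
    (∀ i j : Fin n, i ≠ j →
      {τ : Equiv.Perm (Fin n) | (∀ q : ℕ, q.Prime → q ∣ orderOf τ → q ∈ π) ∧
          τ 0 = i ∧ τ i = 0} ∩
        {τ : Equiv.Perm (Fin n) | (∀ q : ℕ, q.Prime → q ∣ orderOf τ → q ∈ π) ∧
          τ 0 = j ∧ τ j = 0} = ∅) ∧
    (∀ j : Fin n, j ≠ 0 → j ≠ 1 →
      ∀ τ ∈ {τ : Equiv.Perm (Fin n) | (∀ q : ℕ, q.Prime → q ∣ orderOf τ → q ∈ π) ∧
          τ 0 = j ∧ τ j = 0},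
        (∀ q : ℕ, q.Prime → q ∣ orderOf τ → q ∈ π) ∧
          ¬ Commute τ (Equiv.swap (0 : Fin n) 1)) ∧
    (∀ j : Fin n, j ≠ 0 → j ≠ 1 →
      Nat.card {τ : Equiv.Perm (Fin n) | (∀ q : ℕ, q.Prime → q ∣ orderOf τ → q ∈ π) ∧
          τ 0 = j ∧ τ j = 0}
        = Nat.card {σ : Equiv.Perm (Fin n) |
            (∀ q : ℕ, q.Prime → q ∣ orderOf σ → q ∈ π) ∧ σ 0 = 0 ∧ σ 1 = 1}) ∧
    n * Nat.card {σ : Equiv.Perm (Fin n) |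
        (∀ q : ℕ, q.Prime → q ∣ orderOf σ → q ∈ π) ∧ σ 0 = 0 ∧ σ 1 = 1}
      ≤ Nat.card {τ : Equiv.Perm (Fin n) | ∀ q : ℕ, q.Prime → q ∣ orderOf τ → q ∈ π} :=
  swap_noncommuting_pi_sets_general hn π h2π
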